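/- Let n ≥ 1 and let H be an irreducible subgroup of SL(n,ℂ). Then Z_n(H) is a finite group whose order divides n². Moreover, Z_n(H) is an irreducible subgroup of PSL(n,ℂ) if and only if |Z_n(H)| = n². -/

import Mathlib

open Matrix

noncomputable section

abbrev SLC (n : ℕ) : Type := Matrix.SpecialLinearGroup (Fin n) ℂ

def xi (n : ℕ) : ℂ := Complex.exp (2 * Real.pi * Complex.I / n)

lemma xi_pow_self (n : ℕ) (hn : n ≠ 0) : xi n ^ n = 1 := by
  have h : (n : ℂ) ≠ 0 := Nat.cast_ne_zero.mpr hn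
  have h2 : (n : ℂ) * (2 * Real.pi * Complex.I / n) = 2 * Real.pi * Complex.I := by
    field_simp
  simp only [xi]
  rw [← Complex.exp_nat_mul, h2, Complex.exp_two_pi_mul_I]

def xiSL (n : ℕ) : SLC n :=
  if hn : n = 0 then 1 else
    ⟨xi n • (1 : Matrix (Fin n) (Fin n) ℂ), by
      rw [Matrix.det_smul, Matrix.det_one, Fintype.card_fin, mul_one, xi_pow_self n hn]⟩

lemma xiSL_mem_center (n : ℕ) : xiSL n ∈ Subgroup.center (SLC n) := by
  rw [Subgroup.mem_center_iff]
  intro g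
  by_cases hn : n = 0
  · have h1 : xiSL n = 1 := dif_pos hn
    rw [h1]; simp
  · have h1 : xiSL n = ⟨xi n • (1 : Matrix (Fin n) (Fin n) ℂ), by
        rw [Matrix.det_smul, Matrix.det_one, Fintype.card_fin, mul_one, xi_pow_self n hn]⟩ :=
      dif_neg hn
    rw [h1]
    apply Subtype.ext
    show (g : Matrix (Fin n) (Fin n) ℂ) * (xi n • (1 : Matrix (Fin n) (Fin n) ℂ)) =
      (xi n • (1 : Matrix (Fin n) (Fin n) ℂ)) * (g : Matrix (Fin n) (Fin n) ℂ)
    rw [mul_smul_comm, smul_mul_assoc, mul_one, one_mul]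

def centerSL (n : ℕ) : Subgroup (SLC n) := Subgroup.zpowers (xiSL n)

instance centerSL_normal (n : ℕ) : (centerSL n).Normal := by
  constructor
  intro x hx g
  have hc : g * x = x * g :=
    Subgroup.mem_center_iff.mp ((Subgroup.zpowers_le.mpr (xiSL_mem_center n)) hx) g
  have h : g * x * g⁻¹ = x := by rw [hc, mul_inv_cancel_right]
  rwa [h]

abbrev PSLC (n : ℕ) : Type := SLC n ⧸ centerSL n

def pin (n : ℕ) : SLC n →* PSLC n := QuotientGroup.mk' (centerSL n)

def IsIrreducibleSL (n : ℕ) (H : Subgroup (SLC n)) : Prop :=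
  ∀ W : Submodule ℂ (Fin n → ℂ),
    (∀ h ∈ H, ∀ v ∈ W, Matrix.mulVec (h : Matrix (Fin n) (Fin n) ℂ) v ∈ W) →
      W = ⊥ ∨ W = ⊤

def Zc (n : ℕ) (H : Subgroup (SLC n)) : Subgroup (PSLC n) :=
  Subgroup.centralizer ((H.map (pin n) : Subgroup (PSLC n)) : Set (PSLC n))

def Un (n : ℕ) (H : Subgroup (SLC n)) : Subgroup (SLC n) :=
  (Zc n H).comap (pin n)

def IsIrreduciblePSL (n : ℕ) (K : Subgroup (PSLC n)) : Prop :=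
  IsIrreducibleSL n (K.comap (pin n))

def ConjSub {G : Type*} [Group G] (A B : Subgroup G) : Prop :=
  ∃ g : G, A.map (MulAut.conj g).toMonoidHom = B



open scoped Classical


lemma xi_prim (n : ℕ) (hn : n ≠ 0) : IsPrimitiveRoot (xi n) n :=
  Complex.isPrimitiveRoot_exp n hn

lemma coe_xiSL (n : ℕ) (hn : n ≠ 0) :
    (xiSL n : Matrix (Fin n) (Fin n) ℂ) = xi n • 1 := by
  have h1 : xiSL n = ⟨xi n • (1 : Matrix (Fin n) (Fin n) ℂ), by
      rw [Matrix.det_smul, Matrix.det_one, Fintype.card_fin, mul_one, xi_pow_self n hn]⟩ :=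
    dif_neg hn
  rw [h1]

lemma SL_coe_ne_zero {n : ℕ} (hn : n ≠ 0) (g : SLC n) :
    (g : Matrix (Fin n) (Fin n) ℂ) ≠ 0 := by
  intro h0
  have : Nonempty (Fin n) := ⟨⟨0, Nat.pos_of_ne_zero hn⟩⟩
  have hdet : (g : Matrix (Fin n) (Fin n) ℂ).det = 1 := g.2
  rw [h0, Matrix.det_zero] at hdet
  exact zero_ne_one hdet

lemma scalar_pow_eq_one {n : ℕ} (hn : n ≠ 0) (g : SLC n) (c : ℂ)
    (hc : (g : Matrix (Fin n) (Fin n) ℂ) = c • 1) : c ^ n = 1 := by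
  have hdet : (g : Matrix (Fin n) (Fin n) ℂ).det = 1 := g.2
  rw [hc, Matrix.det_smul, Matrix.det_one, Fintype.card_fin, mul_one] at hdet
  exact hdet

lemma smul_coe_inv {n : ℕ} (hn : n ≠ 0) (g : SLC n) (c : ℂ)
    (hc : (g : Matrix (Fin n) (Fin n) ℂ) = c • 1) :
    ((g⁻¹ : SLC n) : Matrix (Fin n) (Fin n) ℂ) = c⁻¹ • 1 := by
  have hc0 : c ≠ 0 := by
    intro h
    apply SL_coe_ne_zero hn g
    rw [hc, h, zero_smul]
  have h1 : ((g * g⁻¹ : SLC n) : Matrix (Fin n) (Fin n) ℂ) = 1 := by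
    rw [mul_inv_cancel]; rfl
  rw [Matrix.SpecialLinearGroup.coe_mul, hc, Matrix.smul_mul, Matrix.one_mul] at h1
  calc ((g⁻¹ : SLC n) : Matrix (Fin n) (Fin n) ℂ)
      = (c⁻¹ * c) • ((g⁻¹ : SLC n) : Matrix (Fin n) (Fin n) ℂ) := by
        rw [inv_mul_cancel₀ hc0, one_smul]
    _ = c⁻¹ • (c • ((g⁻¹ : SLC n) : Matrix (Fin n) (Fin n) ℂ)) := by rw [smul_smul]
    _ = c⁻¹ • 1 := by rw [h1]

lemma xiSL_pow_coe (n : ℕ) (hn : n ≠ 0) (k : ℕ) :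
    ((xiSL n ^ k : SLC n) : Matrix (Fin n) (Fin n) ℂ) = (xi n ^ k) • 1 := by
  induction k with
  | zero => simp
  | succ k ih =>
      rw [pow_succ, Matrix.SpecialLinearGroup.coe_mul, ih, coe_xiSL n hn,
        Matrix.smul_mul, Matrix.mul_smul, Matrix.one_mul, smul_smul, pow_succ]

lemma mem_centerSL_iff {n : ℕ} (hn : n ≠ 0) (g : SLC n) :
    g ∈ centerSL n ↔ ∃ c : ℂ, (g : Matrix (Fin n) (Fin n) ℂ) = c • 1 := by
  constructor
  · intro hg
    obtain ⟨k, hk⟩ := hg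
    have hpow : ∀ m : ℕ, ∃ c : ℂ, ((xiSL n ^ m : SLC n) : Matrix (Fin n) (Fin n) ℂ) = c • 1 :=
      fun m => ⟨xi n ^ m, xiSL_pow_coe n hn m⟩
    obtain ⟨m, hm | hm⟩ := k.eq_nat_or_neg
    · subst hm
      rw [show (fun x => xiSL n ^ x) (m : ℤ) = xiSL n ^ m from zpow_natCast _ m] at hk
      obtain ⟨c, hc⟩ := hpow m
      exact ⟨c, by rw [← hk]; exact hc⟩
    · subst hm
      rw [show (fun x => xiSL n ^ x) (-(m : ℤ)) = (xiSL n ^ m)⁻¹ by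
        rw [← zpow_natCast (xiSL n) m]; exact _root_.zpow_neg _ _] at hk
      obtain ⟨c, hc⟩ := hpow m
      exact ⟨c⁻¹, by rw [← hk]; exact smul_coe_inv hn _ c hc⟩
  · rintro ⟨c, hc⟩
    have hcn : c ^ n = 1 := scalar_pow_eq_one hn g c hc
    have : NeZero n := ⟨hn⟩
    obtain ⟨i, hi, hxi⟩ := (xi_prim n hn).eq_pow_of_pow_eq_one hcn
    refine ⟨(i : ℤ), ?_⟩
    show xiSL n ^ (i : ℤ) = g
    rw [zpow_natCast]
    apply Subtype.ext
    rw [xiSL_pow_coe n hn, hxi, hc]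

lemma orderOf_xiSL (n : ℕ) (hn : n ≠ 0) : orderOf (xiSL n) = n := by
  have hpos : 0 < n := Nat.pos_of_ne_zero hn
  rw [orderOf_eq_iff hpos]
  constructor
  · apply Subtype.ext
    rw [xiSL_pow_coe n hn, (xi_prim n hn).pow_eq_one, one_smul]
    simp
  · intro m hm hm0 h1
    have := congrArg (Subtype.val) h1
    rw [xiSL_pow_coe n hn] at this
    have hx1 : xi n ^ m = 1 := by
      have := congrFun (congrFun this ⟨0, hpos⟩) ⟨0, hpos⟩
      simpa using this
    exact (xi_prim n hn).pow_ne_one_of_pos_of_lt hm0.ne' hm hx1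

lemma card_centerSL (n : ℕ) (hn : n ≠ 0) : Nat.card (centerSL n) = n := by
  rw [centerSL, Nat.card_zpowers, orderOf_xiSL n hn]

instance centerSL_finite (n : ℕ) : Finite (centerSL n) := by
  rcases Nat.eq_zero_or_pos n with h | h
  · subst h
    have : Subsingleton (SLC 0) := by
      constructor; intro a b; apply Subtype.ext; ext i; exact absurd i.2 (Nat.not_lt_zero _)
    infer_instance
  · have := card_centerSL n h.ne'
    exact Nat.finite_of_card_ne_zero (by omega)


lemma schur {n : ℕ} (hn : n ≠ 0) (K : Subgroup (SLC n)) (hK : IsIrreducibleSL n K)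
    (x : Matrix (Fin n) (Fin n) ℂ)
    (hx : ∀ g ∈ K, (g : Matrix (Fin n) (Fin n) ℂ) * x = x * g) :
    ∃ c : ℂ, x = c • 1 := by
  have : Nonempty (Fin n) := ⟨⟨0, Nat.pos_of_ne_zero hn⟩⟩
  set T : Module.End ℂ (Fin n → ℂ) := Matrix.toLin' x with hT
  obtain ⟨c, hc⟩ := Module.End.exists_eigenvalue T
  obtain ⟨v, hv⟩ := hc.exists_hasEigenvector
  refine ⟨c, ?_⟩
  have hW := hK (Module.End.eigenspace T c) ?_
  · rcases hW with h | h
    · exfalso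
      have hv1 : v ∈ Module.End.eigenspace T c := hv.1
      rw [h, Submodule.mem_bot] at hv1
      exact hv.2 hv1
    · apply Matrix.toLin'.injective
      apply LinearMap.ext
      intro w
      have hw : w ∈ Module.End.eigenspace T c := h ▸ Submodule.mem_top
      have hw2 : T w = c • w := Module.End.mem_eigenspace_iff.mp hw
      simp only [Matrix.toLin'_apply] at hw2 ⊢
      rw [Matrix.smul_mulVec, Matrix.one_mulVec]
      exact hw2
  · intro h hh w hw
    rw [Module.End.mem_eigenspace_iff] at hw ⊢
    rw [hT, Matrix.toLin'_apply] at hw ⊢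
    rw [Matrix.mulVec_mulVec, ← hx h hh, ← Matrix.mulVec_mulVec, hw, Matrix.mulVec_smul]

lemma un_conj {n : ℕ} (hn : n ≠ 0) {H : Subgroup (SLC n)} {u : SLC n} (hu : u ∈ Un n H)
    {h : SLC n} (hh : h ∈ H) :
    ∃ c : ℂ, (u : Matrix (Fin n) (Fin n) ℂ) * h
      = c • ((h : Matrix (Fin n) (Fin n) ℂ) * u) := by
  have hz : pin n u ∈ Zc n H := Subgroup.mem_comap.mp hu
  have hcomm := Subgroup.mem_centralizer_iff.mp hz (pin n h)
    (Subgroup.mem_map_of_mem (pin n) hh)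
  have heq : pin n (h * u) = pin n (u * h) := by
    rw [_root_.map_mul, _root_.map_mul, hcomm]
  obtain ⟨z, hzmem, hzz⟩ := (QuotientGroup.mk'_eq_mk' (N := centerSL n)).mp heq
  obtain ⟨c, hc⟩ := (mem_centerSL_iff hn z).mp hzmem
  refine ⟨c, ?_⟩
  have : ((u * h : SLC n) : Matrix (Fin n) (Fin n) ℂ)
      = ((h * u * z : SLC n) : Matrix (Fin n) (Fin n) ℂ) := by rw [hzz]
  rw [Matrix.SpecialLinearGroup.coe_mul] at this
  rw [this, Matrix.SpecialLinearGroup.coe_mul, Matrix.SpecialLinearGroup.coe_mul, hc,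
    Matrix.mul_smul, Matrix.mul_one]

lemma conj_scalar_unique {n : ℕ} (hn : n ≠ 0) (u h : SLC n) (c d : ℂ)
    (h1 : (u : Matrix (Fin n) (Fin n) ℂ) * h = c • ((h : Matrix (Fin n) (Fin n) ℂ) * u))
    (h2 : (u : Matrix (Fin n) (Fin n) ℂ) * h = d • ((h : Matrix (Fin n) (Fin n) ℂ) * u)) :
    c = d := by
  have hne : (h : Matrix (Fin n) (Fin n) ℂ) * u ≠ 0 := by
    rw [← Matrix.SpecialLinearGroup.coe_mul]
    exact SL_coe_ne_zero hn _
  have := h1.symm.trans h2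
  exact smul_left_injective ℂ hne this

def lam {n : ℕ} (u h : SLC n) : ℂ :=
  if P : ∃ c : ℂ, (u : Matrix (Fin n) (Fin n) ℂ) * h
      = c • ((h : Matrix (Fin n) (Fin n) ℂ) * u)
  then P.choose else 1

lemma lam_spec {n : ℕ} (hn : n ≠ 0) {H : Subgroup (SLC n)} {u : SLC n} (hu : u ∈ Un n H)
    {h : SLC n} (hh : h ∈ H) :
    (u : Matrix (Fin n) (Fin n) ℂ) * h = lam u h • ((h : Matrix (Fin n) (Fin n) ℂ) * u) := by
  have P := un_conj hn hu hh
  rw [lam, dif_pos P]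
  exact P.choose_spec

lemma lam_pow {n : ℕ} (hn : n ≠ 0) {H : Subgroup (SLC n)} {u : SLC n} (hu : u ∈ Un n H)
    {h : SLC n} (hh : h ∈ H) : lam u h ^ n = 1 := by
  have hz : pin n u ∈ Zc n H := Subgroup.mem_comap.mp hu
  have hcomm := Subgroup.mem_centralizer_iff.mp hz (pin n h)
    (Subgroup.mem_map_of_mem (pin n) hh)
  have heq : pin n (h * u) = pin n (u * h) := by rw [_root_.map_mul, _root_.map_mul, hcomm]
  obtain ⟨z, hzmem, hzz⟩ := (QuotientGroup.mk'_eq_mk' (N := centerSL n)).mp heq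
  obtain ⟨c, hc⟩ := (mem_centerSL_iff hn z).mp hzmem
  have hcn : c ^ n = 1 := scalar_pow_eq_one hn z c hc
  have hcc : (u : Matrix (Fin n) (Fin n) ℂ) * h
      = c • ((h : Matrix (Fin n) (Fin n) ℂ) * u) := by
    have : ((u * h : SLC n) : Matrix (Fin n) (Fin n) ℂ)
        = ((h * u * z : SLC n) : Matrix (Fin n) (Fin n) ℂ) := by rw [hzz]
    rw [Matrix.SpecialLinearGroup.coe_mul] at this
    rw [this, Matrix.SpecialLinearGroup.coe_mul, Matrix.SpecialLinearGroup.coe_mul, hc,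
      Matrix.mul_smul, Matrix.mul_one]
  rw [conj_scalar_unique hn u h _ c (lam_spec hn hu hh) hcc]
  exact hcn

lemma lam_mul {n : ℕ} (hn : n ≠ 0) {H : Subgroup (SLC n)} {u : SLC n} (hu : u ∈ Un n H)
    {h₁ h₂ : SLC n} (hh₁ : h₁ ∈ H) (hh₂ : h₂ ∈ H) :
    lam u (h₁ * h₂) = lam u h₁ * lam u h₂ := by
  have e1 := lam_spec hn hu hh₁
  have e2 := lam_spec hn hu hh₂
  have e3 : (u : Matrix (Fin n) (Fin n) ℂ) * (h₁ * h₂ : SLC n)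
      = (lam u h₁ * lam u h₂) • (((h₁ * h₂ : SLC n) : Matrix (Fin n) (Fin n) ℂ) * u) := by
    rw [Matrix.SpecialLinearGroup.coe_mul, ← Matrix.mul_assoc, e1,
      Matrix.smul_mul, Matrix.mul_assoc, e2, Matrix.mul_smul, smul_smul,
      Matrix.mul_assoc]
  exact conj_scalar_unique hn u (h₁ * h₂) _ _ (lam_spec hn hu (mul_mem hh₁ hh₂)) e3

lemma lam_one {n : ℕ} (hn : n ≠ 0) {H : Subgroup (SLC n)} {u : SLC n} (hu : u ∈ Un n H) :
    lam u (1 : SLC n) = 1 := by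
  have e1 : (u : Matrix (Fin n) (Fin n) ℂ) * (1 : SLC n)
      = (1 : ℂ) • (((1 : SLC n) : Matrix (Fin n) (Fin n) ℂ) * u) := by
    simp
  exact conj_scalar_unique hn u 1 _ _ (lam_spec hn hu (one_mem H)) e1

/-- The character of `H` attached to `u ∈ Un`. -/
def chiOf {n : ℕ} (hn : n ≠ 0) (H : Subgroup (SLC n)) {u : SLC n} (hu : u ∈ Un n H) :
    ↥H →* ℂ where
  toFun h := lam u (h : SLC n)
  map_one' := lam_one hn hu
  map_mul' h₁ h₂ := lam_mul hn hu h₁.2 h₂.2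

lemma chiOf_apply {n : ℕ} (hn : n ≠ 0) (H : Subgroup (SLC n)) {u : SLC n}
    (hu : u ∈ Un n H) (h : ↥H) : chiOf hn H hu h = lam u (h : SLC n) := rfl

lemma trace_eq_zero_of_not_center {n : ℕ} (hn : n ≠ 0) (H : Subgroup (SLC n))
    (hH : IsIrreducibleSL n H) {u : SLC n} (hu : u ∈ Un n H) (hnc : u ∉ centerSL n) :
    (u : Matrix (Fin n) (Fin n) ℂ).trace = 0 := by
  by_cases hcom : ∀ h ∈ H, (h : Matrix (Fin n) (Fin n) ℂ) * u = (u : Matrix (Fin n) (Fin n) ℂ) * h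
  · exfalso
    obtain ⟨c, hc⟩ := schur hn H hH u hcom
    exact hnc ((mem_centerSL_iff hn u).mpr ⟨c, hc⟩)
  · push_neg at hcom
    obtain ⟨h, hh, hne⟩ := hcom
    have hspec := lam_spec hn hu hh
    set c := lam u h with hcdef
    have hc1 : c ≠ 1 := by
      intro h1
      rw [h1, one_smul] at hspec
      exact hne hspec.symm
    have hhinv : (h : Matrix (Fin n) (Fin n) ℂ) * ((h⁻¹ : SLC n) : Matrix (Fin n) (Fin n) ℂ)
        = 1 := by
      rw [← Matrix.SpecialLinearGroup.coe_mul, mul_inv_cancel]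
      simp
    have e1 : (u : Matrix (Fin n) (Fin n) ℂ)
        = c • ((h : Matrix (Fin n) (Fin n) ℂ) * u * ((h⁻¹ : SLC n) : Matrix (Fin n) (Fin n) ℂ)) := by
      calc (u : Matrix (Fin n) (Fin n) ℂ)
          = (u : Matrix (Fin n) (Fin n) ℂ) * ((h : Matrix (Fin n) (Fin n) ℂ)
              * ((h⁻¹ : SLC n) : Matrix (Fin n) (Fin n) ℂ)) := by rw [hhinv, Matrix.mul_one]
        _ = ((u : Matrix (Fin n) (Fin n) ℂ) * (h : Matrix (Fin n) (Fin n) ℂ))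
              * ((h⁻¹ : SLC n) : Matrix (Fin n) (Fin n) ℂ) := by rw [Matrix.mul_assoc]
        _ = c • ((h : Matrix (Fin n) (Fin n) ℂ) * u * ((h⁻¹ : SLC n) : Matrix (Fin n) (Fin n) ℂ)) := by
            rw [hspec, Matrix.smul_mul]
    have e2 : (u : Matrix (Fin n) (Fin n) ℂ).trace
        = c * (u : Matrix (Fin n) (Fin n) ℂ).trace := by
      conv_lhs => rw [e1]
      rw [Matrix.trace_smul, Matrix.trace_mul_comm, ← Matrix.mul_assoc]
      have : ((h⁻¹ : SLC n) : Matrix (Fin n) (Fin n) ℂ) * (h : Matrix (Fin n) (Fin n) ℂ) = 1 := by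
        rw [← Matrix.SpecialLinearGroup.coe_mul, inv_mul_cancel]
        simp
      rw [this, Matrix.one_mul, smul_eq_mul]
    have h3 : (1 - c) * (u : Matrix (Fin n) (Fin n) ℂ).trace = 0 := by
      linear_combination e2
    rcases mul_eq_zero.mp h3 with h0 | h0
    · exact absurd (show c = 1 by linear_combination -h0) hc1
    · exact h0


lemma centerSL_le_Un (n : ℕ) (H : Subgroup (SLC n)) : centerSL n ≤ Un n H := by
  intro z hz
  have h1 : pin n z = 1 := (QuotientGroup.eq_one_iff z).mpr hz
  rw [Un, Subgroup.mem_comap, h1]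
  exact one_mem _

lemma pin_eq_of_chi_eq {n : ℕ} (hn : n ≠ 0) (H : Subgroup (SLC n)) (hH : IsIrreducibleSL n H)
    {u v : SLC n} (hu : u ∈ Un n H) (hv : v ∈ Un n H)
    (hl : ∀ h : SLC n, h ∈ H → lam u h = lam v h) : pin n u = pin n v := by
  set M := Matrix (Fin n) (Fin n) ℂ
  have hcomm : ∀ h ∈ H, (h : M) * ((v⁻¹ * u : SLC n) : M) = ((v⁻¹ * u : SLC n) : M) * h := by
    intro h hh
    have hc0 : lam u h ≠ 0 := by
      intro h0
      have := lam_pow hn hu hh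
      rw [h0, zero_pow hn] at this
      exact zero_ne_one this
    have e1 := lam_spec hn hu hh
    have e2 := lam_spec hn hv hh
    rw [← hl h hh] at e2
    have hvv : ((v⁻¹ : SLC n) : M) * (v : M) = 1 := by
      rw [← Matrix.SpecialLinearGroup.coe_mul, inv_mul_cancel]; simp
    have hvv' : (v : M) * ((v⁻¹ : SLC n) : M) = 1 := by
      rw [← Matrix.SpecialLinearGroup.coe_mul, mul_inv_cancel]; simp
    -- h * v⁻¹ = lam u h • (v⁻¹ * h)
    have e3 : (h : M) * ((v⁻¹ : SLC n) : M) = lam u h • (((v⁻¹ : SLC n) : M) * h) := by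
      have := congrArg (fun X => ((v⁻¹ : SLC n) : M) * X * ((v⁻¹ : SLC n) : M)) e2
      calc (h : M) * ((v⁻¹ : SLC n) : M)
          = ((v⁻¹ : SLC n) : M) * ((v : M) * (h : M)) * ((v⁻¹ : SLC n) : M) := by
            rw [← Matrix.mul_assoc, hvv, Matrix.one_mul]
        _ = ((v⁻¹ : SLC n) : M) * (lam u h • ((h : M) * (v : M))) * ((v⁻¹ : SLC n) : M) := by
            rw [e2]
        _ = lam u h • (((v⁻¹ : SLC n) : M) * (h : M) * ((v : M) * ((v⁻¹ : SLC n) : M))) := by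
            rw [Matrix.mul_smul, Matrix.smul_mul]
            congr 1
            rw [Matrix.mul_assoc, Matrix.mul_assoc, Matrix.mul_assoc]
        _ = lam u h • (((v⁻¹ : SLC n) : M) * h) := by rw [hvv', Matrix.mul_one]
    rw [Matrix.SpecialLinearGroup.coe_mul]
    calc (h : M) * (((v⁻¹ : SLC n) : M) * (u : M))
        = ((h : M) * ((v⁻¹ : SLC n) : M)) * (u : M) := by rw [Matrix.mul_assoc]
      _ = lam u h • (((v⁻¹ : SLC n) : M) * (h : M)) * (u : M) := by rw [e3]
      _ = lam u h • (((v⁻¹ : SLC n) : M) * ((h : M) * (u : M))) := by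
          rw [Matrix.smul_mul, Matrix.mul_assoc]
      _ = ((v⁻¹ : SLC n) : M) * ((u : M) * (h : M)) := by
          rw [e1, Matrix.mul_smul]
      _ = (((v⁻¹ : SLC n) : M) * (u : M)) * (h : M) := by rw [Matrix.mul_assoc]
  obtain ⟨c, hc⟩ := schur hn H hH _ hcomm
  have hmem : (v⁻¹ * u : SLC n) ∈ centerSL n := (mem_centerSL_iff hn _).mpr ⟨c, hc⟩
  have : pin n (v⁻¹ * u) = 1 := (QuotientGroup.eq_one_iff _).mpr hmem
  rw [_root_.map_mul] at this
  have h2 := eq_inv_of_mul_eq_one_left this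
  rw [map_inv] at h2
  exact (inv_injective h2).symm

/-- choice of a lift of an element of `Zc`. -/
def uZ (n : ℕ) (H : Subgroup (SLC n)) (z : ↥(Zc n H)) : SLC n :=
  (QuotientGroup.mk'_surjective (centerSL n) (z : PSLC n)).choose

lemma uZ_spec (n : ℕ) (H : Subgroup (SLC n)) (z : ↥(Zc n H)) :
    pin n (uZ n H z) = (z : PSLC n) :=
  (QuotientGroup.mk'_surjective (centerSL n) (z : PSLC n)).choose_spec

lemma uZ_mem (n : ℕ) (H : Subgroup (SLC n)) (z : ↥(Zc n H)) : uZ n H z ∈ Un n H := by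
  rw [Un, Subgroup.mem_comap, uZ_spec]
  exact z.2

lemma uZ_linIndep {n : ℕ} (hn : n ≠ 0) (H : Subgroup (SLC n)) (hH : IsIrreducibleSL n H) :
    LinearIndependent ℂ
      (fun z : ↥(Zc n H) => ((uZ n H z : SLC n) : Matrix (Fin n) (Fin n) ℂ)) := by
  set M := Matrix (Fin n) (Fin n) ℂ
  have hchi : LinearIndependent ℂ
      (fun z : ↥(Zc n H) => ((chiOf hn H (uZ_mem n H z) : ↥H →* ℂ) : ↥H → ℂ)) := by
    apply (linearIndependent_monoidHom ↥H ℂ).comp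
    intro z z' heq
    have hpz : pin n (uZ n H z) = pin n (uZ n H z') := by
      apply pin_eq_of_chi_eq hn H hH (uZ_mem n H z) (uZ_mem n H z')
      intro h hh
      have := congrFun (congrArg (fun (f : ↥H →* ℂ) => (f : ↥H → ℂ)) heq) ⟨h, hh⟩
      simpa [chiOf_apply] using this
    apply Subtype.ext
    rw [← uZ_spec n H z, ← uZ_spec n H z', hpz]
  rw [linearIndependent_iff'] at hchi ⊢
  intro s g hsum z hz
  by_contra hgz
  -- key: for every h ∈ H, ∑ z in s, (g z * lam (uZ z) h) • (uZ z) = 0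
  have key : ∀ h : SLC n, h ∈ H →
      (∑ z ∈ s, (g z * lam (uZ n H z) h) • ((uZ n H z : SLC n) : M)) = 0 := by
    intro h hh
    have h1 : (∑ z ∈ s, g z • ((uZ n H z : SLC n) : M)) * (h : M) = 0 := by
      rw [hsum, Matrix.zero_mul]
    rw [Finset.sum_mul] at h1
    have h2 : ∑ z ∈ s, (g z * lam (uZ n H z) h) • ((h : M) * ((uZ n H z : SLC n) : M)) = 0 := by
      rw [← h1]
      apply Finset.sum_congr rfl
      intro z _
      rw [Matrix.smul_mul, ← smul_smul, ← lam_spec hn (uZ_mem n H z) hh]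
    have h3 : (h : M) * (∑ z ∈ s, (g z * lam (uZ n H z) h) • ((uZ n H z : SLC n) : M)) = 0 := by
      rw [Finset.mul_sum, ← h2]
      apply Finset.sum_congr rfl
      intro z _
      rw [Matrix.mul_smul]
    have hhinv : ((h⁻¹ : SLC n) : M) * (h : M) = 1 := by
      rw [← Matrix.SpecialLinearGroup.coe_mul, inv_mul_cancel]; simp
    calc (∑ z ∈ s, (g z * lam (uZ n H z) h) • ((uZ n H z : SLC n) : M))
        = (((h⁻¹ : SLC n) : M) * (h : M)) *
            (∑ z ∈ s, (g z * lam (uZ n H z) h) • ((uZ n H z : SLC n) : M)) := by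
          rw [hhinv, Matrix.one_mul]
      _ = ((h⁻¹ : SLC n) : M) * ((h : M) *
            (∑ z ∈ s, (g z * lam (uZ n H z) h) • ((uZ n H z : SLC n) : M))) := by
          rw [Matrix.mul_assoc]
      _ = 0 := by rw [h3, Matrix.mul_zero]
  -- therefore all entries of uZ z vanish
  have hent : ∀ i j : Fin n, ((uZ n H z : SLC n) : M) i j = 0 := by
    intro i j
    have := hchi s (fun z' => g z' * ((uZ n H z' : SLC n) : M) i j) ?_ z hz
    · rcases mul_eq_zero.mp this with h0 | h0
      · exact absurd h0 hgz
      · exact h0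
    · funext h
      have hk := key (h : SLC n) h.2
      have hk2 := congrArg (fun A : M => A i j) hk
      simp only [Matrix.sum_apply, Matrix.smul_apply, Matrix.zero_apply, smul_eq_mul] at hk2
      simp only [Finset.sum_apply, Pi.smul_apply, Pi.zero_apply, smul_eq_mul, chiOf_apply]
      rw [← hk2]
      exact Finset.sum_congr rfl (fun z' _ => by ring)
  apply SL_coe_ne_zero hn (uZ n H z)
  ext i j
  exact hent i j

lemma Zc_finite {n : ℕ} (hn : n ≠ 0) (H : Subgroup (SLC n)) (hH : IsIrreducibleSL n H) :
    Finite ↥(Zc n H) :=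
  (uZ_linIndep hn H hH).finite

lemma finrank_M (n : ℕ) : Module.finrank ℂ (Matrix (Fin n) (Fin n) ℂ) = n ^ 2 := by
  rw [Module.finrank_matrix, Module.finrank_self, Fintype.card_fin]
  ring

lemma irreducible_Un_of_card {n : ℕ} (hn : n ≠ 0) (H : Subgroup (SLC n))
    (hH : IsIrreducibleSL n H) (hcard : Nat.card ↥(Zc n H) = n ^ 2) :
    IsIrreducibleSL n (Un n H) := by
  set M := Matrix (Fin n) (Fin n) ℂ
  have hfin : Finite ↥(Zc n H) := Zc_finite hn H hH
  letI : Fintype ↥(Zc n H) := Fintype.ofFinite _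
  have hli := uZ_linIndep hn H hH
  have hspan : Submodule.span ℂ
      (Set.range fun z : ↥(Zc n H) => ((uZ n H z : SLC n) : M)) = ⊤ := by
    apply hli.span_eq_top_of_card_eq_finrank'
    rw [finrank_M, ← hcard, Nat.card_eq_fintype_card]
  intro W hW
  by_cases hbot : W = ⊥
  · exact Or.inl hbot
  right
  have hstab : ∀ A : M, ∀ v ∈ W, A.mulVec v ∈ W := by
    set S : Submodule ℂ M :=
      { carrier := {A : M | ∀ v ∈ W, A.mulVec v ∈ W}
        add_mem' := by
          intro A B hA hB v hv
          rw [Matrix.add_mulVec]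
          exact W.add_mem (hA v hv) (hB v hv)
        zero_mem' := by
          intro v hv
          rw [Matrix.zero_mulVec]
          exact W.zero_mem
        smul_mem' := by
          intro c A hA v hv
          rw [Matrix.smul_mulVec]
          exact W.smul_mem c (hA v hv) } with hS
    have hle : Submodule.span ℂ
        (Set.range fun z : ↥(Zc n H) => ((uZ n H z : SLC n) : M)) ≤ S := by
      rw [Submodule.span_le]
      rintro A ⟨z, rfl⟩
      exact fun v hv => hW (uZ n H z) (uZ_mem n H z) v hv
    rw [hspan] at hle
    exact fun A => hle Submodule.mem_top
  obtain ⟨v, hvW, hv0⟩ := (Submodule.ne_bot_iff W).mp hbot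
  obtain ⟨j, hj⟩ := Function.ne_iff.mp hv0
  rw [Submodule.eq_top_iff']
  intro w
  have hA := hstab (fun i k => if k = j then w i * (v j)⁻¹ else 0) v hvW
  have : Matrix.mulVec (fun i k => if k = j then w i * (v j)⁻¹ else 0) v = w := by
    funext i
    simp only [Matrix.mulVec, dotProduct]
    have hfun : (fun k => (if k = j then w i * (v j)⁻¹ else 0) * v k)
        = fun k => if k = j then w i * (v j)⁻¹ * v j else 0 := by
      funext k
      by_cases hk : k = j
      · subst hk; simp
      · simp [hk]
    rw [hfun, Finset.sum_ite_eq' Finset.univ j fun _ => w i * (v j)⁻¹ * v j]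
    simp only [Finset.mem_univ, if_true]
    have hj' : v j ≠ 0 := by simpa using hj
    field_simp
  rwa [this] at hA


/-- the representation of `Un` on `ℂⁿ`. -/
def rhoU (n : ℕ) (H : Subgroup (SLC n)) : Representation ℂ ↥(Un n H) (Fin n → ℂ) where
  toFun g := Matrix.toLin' ((g : SLC n) : Matrix (Fin n) (Fin n) ℂ)
  map_one' := by
    simp only [OneMemClass.coe_one, Matrix.SpecialLinearGroup.coe_one, Matrix.toLin'_one]
    rfl
  map_mul' g h := by
    simp only [Subgroup.coe_mul, Matrix.SpecialLinearGroup.coe_mul, Matrix.toLin'_mul]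
    rfl

lemma trace_toLin' {n : ℕ} (A : Matrix (Fin n) (Fin n) ℂ) :
    LinearMap.trace ℂ (Fin n → ℂ) (Matrix.toLin' A) = A.trace := by
  rw [LinearMap.trace_eq_matrix_trace ℂ (Pi.basisFun ℂ (Fin n)),
    LinearMap.toMatrix_eq_toMatrix', LinearMap.toMatrix'_toLin']

lemma char_rhoU {n : ℕ} (H : Subgroup (SLC n)) (g : ↥(Un n H)) :
    (FDRep.of (rhoU n H)).character g = ((g : SLC n) : Matrix (Fin n) (Fin n) ℂ).trace := by
  rw [FDRep.character]
  rw [show (FDRep.of (rhoU n H)).ρ = rhoU n H from FDRep.of_ρ' (rhoU n H)]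
  exact trace_toLin' _

/-- the restriction of `pin` to `Un`, as a surjection to `Zc`. -/
def pinU (n : ℕ) (H : Subgroup (SLC n)) : ↥(Un n H) →* ↥(Zc n H) :=
  ((pin n).comp (Un n H).subtype).codRestrict (Zc n H) (fun u => u.2)

lemma pinU_surjective (n : ℕ) (H : Subgroup (SLC n)) : Function.Surjective (pinU n H) := by
  intro z
  refine ⟨⟨uZ n H z, uZ_mem n H z⟩, ?_⟩
  apply Subtype.ext
  exact uZ_spec n H z

lemma pinU_ker (n : ℕ) (H : Subgroup (SLC n)) :
    (pinU n H).ker = (centerSL n).subgroupOf (Un n H) := by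
  ext u
  constructor
  · intro hu
    have h1 : pin n (u : SLC n) = 1 := by
      have := congrArg (Subtype.val) hu
      exact this
    have h2 : (u : SLC n) ∈ (QuotientGroup.mk' (centerSL n)).ker := h1
    rwa [QuotientGroup.ker_mk'] at h2
  · intro hu
    apply Subtype.ext
    show pin n (u : SLC n) = 1
    have h2 : (u : SLC n) ∈ (QuotientGroup.mk' (centerSL n)).ker := by
      rw [QuotientGroup.ker_mk']; exact hu
    exact h2

lemma Un_finite {n : ℕ} (hn : n ≠ 0) (H : Subgroup (SLC n)) (hH : IsIrreducibleSL n H) :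
    Finite ↥(Un n H) := by
  have h1 : Finite ↥(Zc n H) := Zc_finite hn H hH
  have h2 : Finite ((centerSL n).subgroupOf (Un n H)) :=
    Finite.of_equiv _ (Subgroup.subgroupOfEquivOfLe (centerSL_le_Un n H)).symm.toEquiv
  have e : ↥(Un n H) ≃ (↥(Un n H) ⧸ (pinU n H).ker) × ↥((pinU n H).ker) :=
    Subgroup.groupEquivQuotientProdSubgroup
  have e2 : (↥(Un n H) ⧸ (pinU n H).ker) ≃ ↥(Zc n H) :=
    (QuotientGroup.quotientKerEquivOfSurjective (pinU n H) (pinU_surjective n H)).toEquiv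
  rw [pinU_ker] at e e2
  exact Finite.of_equiv _ (e.trans (Equiv.prodCongr e2 (Equiv.refl _))).symm

lemma card_Un {n : ℕ} (hn : n ≠ 0) (H : Subgroup (SLC n)) (hH : IsIrreducibleSL n H) :
    Nat.card ↥(Un n H) = n * Nat.card ↥(Zc n H) := by
  have h2 : Nat.card ↥(Un n H)
      = Nat.card (↥(Un n H) ⧸ (pinU n H).ker) * Nat.card ↥((pinU n H).ker) :=
    Subgroup.card_eq_card_quotient_mul_card_subgroup _
  have h3 : Nat.card (↥(Un n H) ⧸ (pinU n H).ker) = Nat.card ↥(Zc n H) :=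
    Nat.card_congr (QuotientGroup.quotientKerEquivOfSurjective (pinU n H)
      (pinU_surjective n H)).toEquiv
  have h4 : Nat.card ↥((pinU n H).ker) = n := by
    rw [pinU_ker]
    rw [Nat.card_congr (Subgroup.subgroupOfEquivOfLe (centerSL_le_Un n H)).toEquiv]
    exact card_centerSL n hn
  rw [h2, h3, h4, mul_comm]

lemma invOf_smul_cancel {c : ℂ} [Invertible c] {x y : ℂ} (h : ⅟c • x = y) : x = c * y := by
  rw [← h, smul_eq_mul, ← mul_assoc, mul_invOf_self, one_mul]

lemma key_count {n : ℕ} (hn : n ≠ 0) (H : Subgroup (SLC n)) (hH : IsIrreducibleSL n H) :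
    Nat.card ↥(Zc n H) *
      Module.finrank ℂ
        ↥((Representation.linHom (FDRep.of (rhoU n H)).ρ (FDRep.of (rhoU n H)).ρ).invariants)
      = n ^ 2 := by
  have hfinU : Finite ↥(Un n H) := Un_finite hn H hH
  letI : Fintype ↥(Un n H) := Fintype.ofFinite _
  have hcardpos : 0 < Fintype.card ↥(Un n H) := Fintype.card_pos
  have hcard0 : ((Fintype.card ↥(Un n H) : ℂ)) ≠ 0 := Nat.cast_ne_zero.mpr hcardpos.ne'
  letI : Invertible ((Fintype.card ↥(Un n H) : ℂ)) := invertibleOfNonzero hcard0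
  set V := FDRep.of (rhoU n H) with hV
  have havg := FDRep.average_char_eq_finrank_invariants
    (FDRep.of (Representation.linHom V.ρ V.ρ))
  have hterm : ∀ g : ↥(Un n H),
      (FDRep.of (Representation.linHom V.ρ V.ρ)).character g
        = if ((g : SLC n) ∈ centerSL n) then ((n : ℂ))^2 else 0 := by
    intro g
    rw [FDRep.char_linHom V V g]
    rw [hV, char_rhoU, char_rhoU]
    by_cases hg : (g : SLC n) ∈ centerSL n
    · rw [if_pos hg]
      obtain ⟨c, hc⟩ := (mem_centerSL_iff hn _).mp hg
      have hcinv := smul_coe_inv hn _ c hc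
      have hc0 : c ≠ 0 := fun h0 => SL_coe_ne_zero hn (g : SLC n) (by rw [hc, h0, zero_smul])
      rw [show ((g⁻¹ : ↥(Un n H)) : SLC n) = ((g : SLC n)⁻¹) from rfl]
      rw [hc, hcinv, Matrix.trace_smul, Matrix.trace_smul, Matrix.trace_one]
      simp only [smul_eq_mul, Fintype.card_fin]
      field_simp
    · rw [if_neg hg, trace_eq_zero_of_not_center hn H hH g.2 hg, mul_zero]
  have hsum : (∑ g : ↥(Un n H), (FDRep.of (Representation.linHom V.ρ V.ρ)).character g)
      = (n : ℂ) * ((n : ℂ))^2 := by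
    rw [Finset.sum_congr rfl (fun g _ => hterm g)]
    rw [Finset.sum_ite, Finset.sum_const, Finset.sum_const_zero, add_zero]
    have hcount : (Finset.univ.filter
        (fun g : ↥(Un n H) => (g : SLC n) ∈ centerSL n)).card = n := by
      have e1 : {g : ↥(Un n H) // (g : SLC n) ∈ centerSL n}
          ≃ ↥((centerSL n).subgroupOf (Un n H)) :=
        Equiv.subtypeEquivRight (fun g => (Subgroup.mem_subgroupOf).symm)
      have e2 := (Subgroup.subgroupOfEquivOfLe (centerSL_le_Un n H)).toEquiv
      have : Fintype.card {g : ↥(Un n H) // (g : SLC n) ∈ centerSL n} = n := by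
        rw [← Nat.card_eq_fintype_card, Nat.card_congr (e1.trans e2), card_centerSL n hn]
      rw [Fintype.card_subtype] at this
      exact this
    rw [hcount, nsmul_eq_mul]
  rw [hsum] at havg
  have hnat := invOf_smul_cancel
    (show ⅟((Fintype.card ↥(Un n H) : ℂ)) • ((n : ℂ) * (n : ℂ) ^ 2)
      = ((Module.finrank ℂ ↥(Representation.invariants (FDRep.of (Representation.linHom V.ρ V.ρ)).ρ) : ℕ) : ℂ) from by
      rw [invOf_eq_inv, smul_eq_mul, ← Nat.card_eq_fintype_card]; exact havg)
  rw [show (FDRep.of (Representation.linHom V.ρ V.ρ)).ρ = Representation.linHom V.ρ V.ρ from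
    FDRep.of_ρ' _] at hnat
  have hcast : ((n : ℂ)) * ((n : ℂ))^2
      = ((Fintype.card ↥(Un n H) : ℕ) : ℂ) *
        ((Module.finrank ℂ ↥((Representation.linHom V.ρ V.ρ).invariants) : ℕ) : ℂ) := hnat
  have hnn : (n : ℕ) * n ^ 2 = Fintype.card ↥(Un n H) *
      Module.finrank ℂ ↥((Representation.linHom V.ρ V.ρ).invariants) := by
    have := hcast
    push_cast at this
    exact_mod_cast this
  have hcardUn : Fintype.card ↥(Un n H) = n * Nat.card ↥(Zc n H) := by
    rw [← Nat.card_eq_fintype_card]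
    exact card_Un hn H hH
  rw [hcardUn] at hnn
  rw [mul_assoc] at hnn
  exact Nat.eq_of_mul_eq_mul_left (Nat.pos_of_ne_zero hn) hnn.symm

lemma invariants_finrank_one {n : ℕ} (hn : n ≠ 0) (H : Subgroup (SLC n))
    (hUirr : IsIrreducibleSL n (Un n H)) :
    Module.finrank ℂ
      ↥((Representation.linHom (FDRep.of (rhoU n H)).ρ (FDRep.of (rhoU n H)).ρ).invariants)
      = 1 := by
  have hVρ : (FDRep.of (rhoU n H)).ρ = rhoU n H := FDRep.of_ρ' _
  rw [hVρ]
  have hrho_apply : ∀ g : ↥(Un n H),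
      (rhoU n H) g = Matrix.toLin' ((g : SLC n) : Matrix (Fin n) (Fin n) ℂ) := fun g => rfl
  have hinv : (Representation.linHom (rhoU n H) (rhoU n H)).invariants
      = Submodule.span ℂ {(LinearMap.id : (Fin n → ℂ) →ₗ[ℂ] (Fin n → ℂ))} := by
    apply le_antisymm
    · intro f hf
      rw [Representation.mem_invariants] at hf
      have hcomm : ∀ g : ↥(Un n H),
          ((rhoU n H) g).comp f = f.comp ((rhoU n H) g) := by
        intro g
        have h1 := hf g
        rw [Representation.linHom_apply] at h1
        have h2 := congrArg (fun F : (Fin n → ℂ) →ₗ[ℂ] (Fin n → ℂ) =>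
          F.comp ((rhoU n H) g)) h1
        have h3 : ((rhoU n H) g⁻¹).comp ((rhoU n H) g) = LinearMap.id := by
          have : (rhoU n H) g⁻¹ * (rhoU n H) g = 1 := by
            rw [← _root_.map_mul, inv_mul_cancel, _root_.map_one]
          exact this
        calc ((rhoU n H) g).comp f
            = ((rhoU n H) g).comp (f.comp (((rhoU n H) g⁻¹).comp ((rhoU n H) g))) := by
              rw [h3, LinearMap.comp_id]
          _ = (((rhoU n H) g).comp (f.comp ((rhoU n H) g⁻¹))).comp ((rhoU n H) g) := by
              rw [LinearMap.comp_assoc, LinearMap.comp_assoc]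
          _ = f.comp ((rhoU n H) g) := by
              rw [← LinearMap.comp_assoc]
              exact h2
      set A := LinearMap.toMatrix' f with hA
      have hAcomm : ∀ u ∈ Un n H,
          (u : Matrix (Fin n) (Fin n) ℂ) * A = A * (u : Matrix (Fin n) (Fin n) ℂ) := by
        intro u hu
        have := hcomm ⟨u, hu⟩
        rw [hrho_apply] at this
        have h4 := congrArg LinearMap.toMatrix' this
        rw [LinearMap.toMatrix'_comp, LinearMap.toMatrix'_comp, LinearMap.toMatrix'_toLin']
          at h4
        exact h4
      obtain ⟨c, hc⟩ := schur hn _ hUirr A hAcomm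
      have hf2 : f = c • LinearMap.id := by
        have h5 := congrArg Matrix.toLin' hc
        rw [Matrix.toLin'_toMatrix'] at h5
        rw [h5, _root_.map_smul, Matrix.toLin'_one]
      rw [hf2]
      exact Submodule.smul_mem _ c (Submodule.mem_span_singleton_self _)
    · rw [Submodule.span_le, Set.singleton_subset_iff, SetLike.mem_coe,
        Representation.mem_invariants]
      intro g
      rw [Representation.linHom_apply, LinearMap.id_comp]
      have : (rhoU n H) g * (rhoU n H) g⁻¹ = 1 := by
        rw [← _root_.map_mul, mul_inv_cancel, _root_.map_one]
      exact this
  rw [hinv]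
  apply finrank_span_singleton
  intro h0
  have hpos : 0 < n := Nat.pos_of_ne_zero hn
  have h1 : (LinearMap.id : (Fin n → ℂ) →ₗ[ℂ] (Fin n → ℂ)) (fun _ => (1 : ℂ))
      = (fun _ => (1 : ℂ)) := rfl
  rw [h0] at h1
  exact zero_ne_one (congrFun h1 ⟨0, hpos⟩)

/-- Corollary 2.5: `Z_n(H)` is finite of order dividing `n²`, and it is irreducible
iff its order is exactly `n²`. -/
theorem stmt4 (n : ℕ) (hn : 1 ≤ n) (H : Subgroup (SLC n)) (hH : IsIrreducibleSL n H) :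
    Finite (Zc n H) ∧ Nat.card (Zc n H) ∣ n ^ 2 ∧
      (IsIrreduciblePSL n (Zc n H) ↔ Nat.card (Zc n H) = n ^ 2) := by
  have hn0 : n ≠ 0 := by omega
  have hfin : Finite (Zc n H) := Zc_finite hn0 H hH
  refine ⟨hfin, ⟨_, (key_count hn0 H hH).symm⟩, ?_, ?_⟩
  · intro hirr
    have hUirr : IsIrreducibleSL n (Un n H) := hirr
    have h1 := invariants_finrank_one hn0 H hUirr
    have h2 := key_count hn0 H hH
    rw [h1, mul_one] at h2
    exact h2
  · intro hcard
    exact irreducible_Un_of_card hn0 H hH hcard
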